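/- arXiv:2504.09008 — 2 statements merged into one kernel-verified Lean document; each statement's English description precedes it below -/
import Mathlib

section
/- Let n ≥ 1, x' ∈ ℝⁿ with x' ≠ 0, and s' ∈ ℝ with 0 ≤ s' < ‖x'‖₂. For any (a, b, c) ∈ ℝⁿ × ℝ × ℝ with (a, b) ≠ 0 such that aᵀx + b·s ≤ c for all (x, s) with ‖x‖₂ ≤ s, and aᵀx' + b·s' ≥ c, the Euclidean distance from (x', s') to the hyperplane {(x, s) : aᵀx + b·s = c}, namely (aᵀx' + b·s' − c)/√(‖a‖₂² + b²), is at most (‖x'‖₂ − s')/√2. Moreover the separating hyperplane {(x, s) : (x')ᵀx = ‖x'‖₂ · s} attains this bound: its distance from (x', s') equals (‖x'‖₂ − s')/√2. -/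
open scoped RealInnerProductSpace

/-- Among all hyperplanes `{(x, s) : ⟪a, x⟫ + b·s = c}` separating the second-order cone
`K = {(x, s) : ‖x‖ ≤ s}` from a violating point `(x', s')` with `0 ≤ s' < ‖x'‖`, the
Euclidean distance `(⟪a, x'⟫ + b·s' − c)/√(‖a‖² + b²)` from `(x', s')` to the hyperplane
is at most `(‖x'‖ − s')/√2`; and the hyperplane `{(x, s) : ⟪x', x⟫ = ‖x'‖·s}` (i.e.
`a = x'`, `b = −‖x'‖`, `c = 0`) attains this bound. -/
theorem soc_max_distance_separating_hyperplane (n : ℕ) (hn : 1 ≤ n)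
    (x' : EuclideanSpace ℝ (Fin n)) (hx' : x' ≠ 0) (s' : ℝ)
    (hs0 : 0 ≤ s') (hviol : s' < ‖x'‖) :
    (∀ (a : EuclideanSpace ℝ (Fin n)) (b c : ℝ), (a, b) ≠ 0 →
        (∀ (x : EuclideanSpace ℝ (Fin n)) (s : ℝ), ‖x‖ ≤ s → ⟪a, x⟫ + b * s ≤ c) →
        c ≤ ⟪a, x'⟫ + b * s' →
        (⟪a, x'⟫ + b * s' - c) / Real.sqrt (‖a‖ ^ 2 + b ^ 2) ≤
          (‖x'‖ - s') / Real.sqrt 2) ∧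
      (⟪x', x'⟫ + (-‖x'‖) * s' - 0) / Real.sqrt (‖x'‖ ^ 2 + (-‖x'‖) ^ 2) =
        (‖x'‖ - s') / Real.sqrt 2 := by
  have hR : (0:ℝ) < ‖x'‖ := norm_pos_iff.mpr hx'
  set R := ‖x'‖ with hRdef
  have hs2 : (0:ℝ) < Real.sqrt 2 := by positivity
  constructor
  · intro a b c hab hsep hge
    -- the projection of (x', s') onto the cone
    have htpos : (0:ℝ) ≤ (R + s') / (2 * R) := by positivity
    have hkx : ‖((R + s') / (2 * R)) • x'‖ = (R + s') / 2 := by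
      rw [norm_smul, Real.norm_of_nonneg htpos]
      field_simp
      ring
    have hk := hsep (((R + s') / (2 * R)) • x') ((R + s') / 2) (le_of_eq hkx)
    rw [real_inner_smul_right] at hk
    -- Cauchy-Schwarz
    have hCS : ⟪a, x'⟫ ≤ ‖a‖ * R := real_inner_le_norm a x'
    -- bound the numerator
    have hb' : b ≤ |b| := le_abs_self b
    have hk' : (R + s') * ⟪a, x'⟫ + b * ((R + s') * R) ≤ 2 * R * c := by
      have h := mul_le_mul_of_nonneg_left hk (by positivity : (0:ℝ) ≤ 2 * R)
      have e : ∀ I : ℝ, 2 * R * ((R + s') / (2 * R) * I + b * ((R + s') / 2)) =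
          (R + s') * I + b * ((R + s') * R) := by
        intro I
        field_simp
      rw [e] at h
      exact h
    have hnb : -b ≤ |b| := neg_le_abs b
    have hrs0 : (0:ℝ) ≤ R - s' := by linarith
    have h1 : (R - s') * ⟪a, x'⟫ ≤ (R - s') * (‖a‖ * R) :=
      mul_le_mul_of_nonneg_left hCS hrs0
    have h2 : (R - s') * R * (-b) ≤ (R - s') * R * |b| :=
      mul_le_mul_of_nonneg_left hnb (by positivity)
    have hnum : ⟪a, x'⟫ + b * s' - c ≤ (R - s') / 2 * (‖a‖ + |b|) := by
      nlinarith [hk', h1, h2, hR]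
    -- denominator positivity
    have hD2 : (0:ℝ) < ‖a‖ ^ 2 + b ^ 2 := by
      rcases (not_and_or.mp (fun h => hab (Prod.ext h.1 h.2))) with h | h
      · have h0 : 0 < ‖a‖ := norm_pos_iff.mpr h
        nlinarith [sq_nonneg b]
      · have h0 : 0 < |b| := abs_pos.mpr h
        nlinarith [sq_nonneg ‖a‖, sq_abs b]
    have hD : (0:ℝ) < Real.sqrt (‖a‖ ^ 2 + b ^ 2) := Real.sqrt_pos.mpr hD2
    have hDsq : Real.sqrt (‖a‖ ^ 2 + b ^ 2) ^ 2 = ‖a‖ ^ 2 + b ^ 2 :=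
      Real.sq_sqrt hD2.le
    have hsq2 : Real.sqrt 2 ^ 2 = 2 := Real.sq_sqrt (by norm_num)
    -- ‖a‖ + |b| ≤ √2 · √(‖a‖² + b²)
    have hab2 : ‖a‖ + |b| ≤ Real.sqrt 2 * Real.sqrt (‖a‖ ^ 2 + b ^ 2) := by
      nlinarith [sq_nonneg (‖a‖ - |b|), sq_abs b, norm_nonneg a, abs_nonneg b,
        mul_pos hs2 hD, sq_nonneg (‖a‖ + |b| - Real.sqrt 2 * Real.sqrt (‖a‖ ^ 2 + b ^ 2))]
    rw [div_le_div_iff₀ hD hs2]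
    have hrs : 0 ≤ (R - s') / 2 := by linarith
    calc (⟪a, x'⟫ + b * s' - c) * Real.sqrt 2
        ≤ (R - s') / 2 * (‖a‖ + |b|) * Real.sqrt 2 := by
          exact mul_le_mul_of_nonneg_right hnum hs2.le
      _ ≤ (R - s') / 2 * (Real.sqrt 2 * Real.sqrt (‖a‖ ^ 2 + b ^ 2)) * Real.sqrt 2 := by
          exact mul_le_mul_of_nonneg_right (mul_le_mul_of_nonneg_left hab2 hrs) hs2.le
      _ = (R - s') * Real.sqrt (‖a‖ ^ 2 + b ^ 2) := by
          linear_combination ((R - s') / 2 * Real.sqrt (‖a‖ ^ 2 + b ^ 2)) * hsq2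
  · have h1 : ⟪x', x'⟫ = R ^ 2 := real_inner_self_eq_norm_sq x'
    have h2 : Real.sqrt (R ^ 2 + (-R) ^ 2) = Real.sqrt 2 * R := by
      rw [show R ^ 2 + (-R) ^ 2 = 2 * R ^ 2 by ring, Real.sqrt_mul (by norm_num),
        Real.sqrt_sq hR.le]
    rw [h1, h2]
    rw [div_eq_div_iff (by positivity : (0:ℝ) < Real.sqrt 2 * R).ne' hs2.ne']
    ring
end

section
/- Let n ≥ 1, x' ∈ ℝⁿ with x' ≠ 0, and s' ∈ ℝ with 0 ≤ s' < ‖x'‖₂. Then the Euclidean distance (in ℝⁿ × ℝ with the Euclidean product norm) from the point (x', s') to the second-order cone K = {(x, s) ∈ ℝⁿ × ℝ : ‖x‖₂ ≤ s} equals (‖x'‖₂ − s')/√2. -/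
/-- For `x' ≠ 0` and `0 ≤ s' < ‖x'‖`, the Euclidean distance (in `ℝⁿ × ℝ` with the
Euclidean product norm, modeled as `WithLp 2 (EuclideanSpace ℝ (Fin n) × ℝ)`) from the
point `(x', s')` to the second-order cone `K = {(x, s) : ‖x‖ ≤ s}` equals
`(‖x'‖ − s')/√2`. -/
theorem soc_infDist (n : ℕ) (hn : 1 ≤ n)
    (x' : EuclideanSpace ℝ (Fin n)) (hx' : x' ≠ 0) (s' : ℝ)
    (hs0 : 0 ≤ s') (hviol : s' < ‖x'‖) :
    Metric.infDist
        ((WithLp.equiv 2 (EuclideanSpace ℝ (Fin n) × ℝ)).symm (x', s'))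
        {q : WithLp 2 (EuclideanSpace ℝ (Fin n) × ℝ) |
          ‖((WithLp.equiv 2 (EuclideanSpace ℝ (Fin n) × ℝ)) q).1‖ ≤
            ((WithLp.equiv 2 (EuclideanSpace ℝ (Fin n) × ℝ)) q).2} =
      (‖x'‖ - s') / Real.sqrt 2 := by
  have hxpos : 0 < ‖x'‖ := norm_pos_iff.mpr hx'
  set d : ℝ := ‖x'‖ - s' with hd
  have hdpos : 0 < d := by simp [hd]; linarith
  set K : Set (WithLp 2 (EuclideanSpace ℝ (Fin n) × ℝ)) :=
    {q | ‖((WithLp.equiv 2 (EuclideanSpace ℝ (Fin n) × ℝ)) q).1‖ ≤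
            ((WithLp.equiv 2 (EuclideanSpace ℝ (Fin n) × ℝ)) q).2} with hK
  have hKne : K.Nonempty := ⟨(WithLp.equiv 2 _).symm (0, 0), by simp [hK]⟩
  set p : WithLp 2 (EuclideanSpace ℝ (Fin n) × ℝ) :=
    (WithLp.equiv 2 _).symm (x', s') with hp
  have hs2 : Real.sqrt 2 > 0 := by positivity
  apply le_antisymm
  · -- upper bound via projection point
    set α : ℝ := (‖x'‖ + s') / (2 * ‖x'‖) with hα
    set q : WithLp 2 (EuclideanSpace ℝ (Fin n) × ℝ) :=
      (WithLp.equiv 2 _).symm (α • x', (‖x'‖ + s') / 2) with hq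
    have hαnn : 0 ≤ α := by positivity
    have hqmem : q ∈ K := by
      simp only [hK, Set.mem_setOf_eq, hq, Equiv.apply_symm_apply]
      rw [norm_smul, Real.norm_of_nonneg hαnn, hα]
      exact le_of_eq (by field_simp)
    refine le_trans (Metric.infDist_le_dist_of_mem hqmem) ?_
    rw [WithLp.prod_dist_eq_of_L2]
    have h1 : dist (WithLp.equiv 2 (EuclideanSpace ℝ (Fin n) × ℝ) p).1
        (WithLp.equiv 2 (EuclideanSpace ℝ (Fin n) × ℝ) q).1 = d / 2 := by
      simp only [hp, hq, Equiv.apply_symm_apply]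
      rw [dist_eq_norm]
      have : x' - α • x' = (1 - α) • x' := by module
      rw [this, norm_smul, Real.norm_of_nonneg, hα]
      · field_simp [hd]; ring
      · rw [hα]; rw [sub_nonneg, div_le_one (by positivity)]; linarith
    have h2 : dist (WithLp.equiv 2 (EuclideanSpace ℝ (Fin n) × ℝ) p).2
        (WithLp.equiv 2 (EuclideanSpace ℝ (Fin n) × ℝ) q).2 = d / 2 := by
      simp only [hp, hq, Equiv.apply_symm_apply]
      rw [Real.dist_eq, hd, abs_of_nonpos (by linarith)]
      ring
    have hpq1 : dist p.fst q.fst = d / 2 := h1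
    have hpq2 : dist p.snd q.snd = d / 2 := h2
    rw [hpq1, hpq2]
    rw [show (d/2)^2 + (d/2)^2 = (d / Real.sqrt 2)^2 by
      have hs22 : Real.sqrt 2 ^ 2 = 2 := Real.sq_sqrt (by norm_num)
      field_simp [hs22]; rw [hs22]; norm_num]
    rw [Real.sqrt_sq (by positivity)]
  · -- lower bound
    by_contra hcon
    push_neg at hcon
    obtain ⟨y, hy, hlt⟩ := (Metric.infDist_lt_iff hKne).mp hcon
    refine absurd hlt (not_lt.mpr ?_)
    rw [WithLp.prod_dist_eq_of_L2]
    set a : ℝ := dist p.fst y.fst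
    set b : ℝ := dist p.snd y.snd
    have hab : d ≤ a + b := by
      have h1 : ‖x'‖ - ‖y.fst‖ ≤ a := by
        have := norm_sub_norm_le (p.fst) y.fst
        simpa [a, dist_eq_norm, hp] using this
      have h2 : y.snd - s' ≤ b := by
        have : |p.snd - y.snd| = b := rfl
        have h3 : y.snd - p.snd ≤ |p.snd - y.snd| := by
          rw [abs_sub_comm]; exact le_abs_self _
        simp only [hp] at h3
        calc y.snd - s' = y.snd - (WithLp.equiv 2 (EuclideanSpace ℝ (Fin n) × ℝ)
            ((WithLp.equiv 2 (EuclideanSpace ℝ (Fin n) × ℝ)).symm (x', s'))).2 := by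
              simp
          _ ≤ b := h3
      have hyK : ‖y.fst‖ ≤ y.snd := hy
      have : ‖x'‖ - s' ≤ (‖x'‖ - ‖y.fst‖) + (y.snd - s') := by linarith
      calc d = ‖x'‖ - s' := hd
        _ ≤ (‖x'‖ - ‖y.fst‖) + (y.snd - s') := this
        _ ≤ a + b := add_le_add h1 h2
    have hsq : (d / Real.sqrt 2)^2 ≤ a^2 + b^2 := by
      have h2 : d^2 ≤ (a+b)^2 := by
        apply sq_le_sq' <;> nlinarith [dist_nonneg (x := p.fst) (y := y.fst),
          dist_nonneg (x := p.snd) (y := y.snd)]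
      have h3 : (a+b)^2 ≤ 2*(a^2+b^2) := by nlinarith [sq_nonneg (a-b)]
      rw [div_pow, Real.sq_sqrt (by norm_num : (0:ℝ) ≤ 2)]
      nlinarith [h2, h3]
    calc d / Real.sqrt 2 = Real.sqrt ((d / Real.sqrt 2)^2) := by
          rw [Real.sqrt_sq (by positivity)]
      _ ≤ Real.sqrt (a^2 + b^2) := Real.sqrt_le_sqrt hsq
end
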